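/- arXiv:1112.5073 — 6 statements merged into one kernel-verified Lean document; each statement's English description precedes it below -/
import Mathlib

section
/- Let L = U³ ⊕ E8(−1)² ⊕ (−2) and L' = U⁴ ⊕ E8(−1)², and let G be any subgroup of the isometry group O(L). Then there exists a primitive embedding ι : L → L' and an extension of the action of G to isometries of L' (i.e., a group homomorphism G → O(L') whose action on ι(L) agrees via ι with the action of G on L) such that S_G(L') = ι(S_G(L)). -/
open Matrix

/-- The hyperbolic plane `U`. -/
def UMat : Matrix (Fin 2) (Fin 2) ℤ := !![0, 1; 1, 0]

/-- `E8(-1)`: the negative of the Cartan matrix of `E8` (Bourbaki numbering). -/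
def E8N : Matrix (Fin 8) (Fin 8) ℤ :=
  !![-2,  0,  1,  0,  0,  0,  0,  0;
      0, -2,  0,  1,  0,  0,  0,  0;
      1,  0, -2,  1,  0,  0,  0,  0;
      0,  1,  1, -2,  1,  0,  0,  0;
      0,  0,  0,  1, -2,  1,  0,  0;
      0,  0,  0,  0,  1, -2,  1,  0;
      0,  0,  0,  0,  0,  1, -2,  1;
      0,  0,  0,  0,  0,  0,  1, -2]

/-- The rank 1 lattice `(-2)`. -/
def minusTwo : Matrix (Fin 1) (Fin 1) ℤ := !![-2]

/-- Index type for `L = U³ ⊕ E8(-1)² ⊕ (-2)` (rank 23). -/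
abbrev IdxL : Type := Fin 2 ⊕ (Fin 2 ⊕ (Fin 2 ⊕ (Fin 8 ⊕ (Fin 8 ⊕ Fin 1))))

/-- Index type for `L' = U⁴ ⊕ E8(-1)²` (rank 24). -/
abbrev IdxL' : Type := Fin 2 ⊕ (Fin 2 ⊕ (Fin 2 ⊕ (Fin 2 ⊕ (Fin 8 ⊕ Fin 8))))

/-- Gram matrix of `L = U³ ⊕ E8(-1)² ⊕ (-2)`. -/
def BL : Matrix IdxL IdxL ℤ :=
  Matrix.fromBlocks UMat 0 0 (Matrix.fromBlocks UMat 0 0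
    (Matrix.fromBlocks UMat 0 0 (Matrix.fromBlocks E8N 0 0
      (Matrix.fromBlocks E8N 0 0 minusTwo))))

/-- Gram matrix of `L' = U⁴ ⊕ E8(-1)²`. -/
def BL' : Matrix IdxL' IdxL' ℤ :=
  Matrix.fromBlocks UMat 0 0 (Matrix.fromBlocks UMat 0 0
    (Matrix.fromBlocks UMat 0 0 (Matrix.fromBlocks UMat 0 0
      (Matrix.fromBlocks E8N 0 0 E8N))))

/-- The bilinear form of the lattice with Gram matrix `B`. -/
def latForm {ι : Type} [Fintype ι] (B : Matrix ι ι ℤ) (x y : ι → ℤ) : ℤ :=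
  x ⬝ᵥ B.mulVec y

/-- `L = U³ ⊕ E8(-1)² ⊕ (-2)` as a `ℤ`-module. -/
abbrev ML : Type := IdxL → ℤ

/-- `L' = U⁴ ⊕ E8(-1)²` as a `ℤ`-module. -/
abbrev ML' : Type := IdxL' → ℤ

/-!
Write `L = M ⊕ ℤ v` with `M = U³ ⊕ E8(-1)²` unimodular and `v² = -2`, and `L' = M ⊕ U` with
`U = ⟨e, f⟩`. Sending `v ↦ e - f` embeds `L` primitively onto the orthogonal complement of
`w = e + f`, and `L' = ι L ⊕ ℤ e`. The discriminant group of `L` is generated by `v / 2`, so every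
isometry `g` of `L` satisfies `g v ≡ v (mod 2 L)`; with `2 h = g v - v`, the map acting as `g` on
`ι L` and sending `e ↦ e + ι h` is an isometry of `L'` fixing `w` (over `ℚ` it is `g ⊕ id` on
`ι L_ℚ ⊕ ℚ w`). Since `w` is invariant, `S_G(L') ⊆ w^⊥ = ι L`; conversely `2 L' ⊆ ι L ⊕ ℤ w`,
so `ι S_G(L)` is orthogonal to `T_G(L')`.
-/

open LinearMap (BilinForm)

/-- `ι` identifies `L` with the orthogonal complement of `w = e + f` in `L'`, and `π` is the
projection of the splitting `L' = ι L ⊕ ℤ e`. -/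
structure LatticeGluing {L L' : Type*} [AddCommGroup L] [AddCommGroup L']
    (β : BilinForm ℤ L) (β' : BilinForm ℤ L') where
  ι : L →ₗ[ℤ] L'
  π : L' →ₗ[ℤ] L
  v : L
  e : L'
  f : L'
  isSymm : β'.IsSymm
  isometry : ∀ x y, β' (ι x) (ι y) = β x y
  π_ι : ∀ x, π (ι x) = x
  ι_π_add_smul : ∀ y, ι (π y) + β' y (e + f) • e = y
  ι_v : ι v = e - f
  ι_orthogonal : ∀ x, β' (ι x) (e + f) = 0
  e_apply_e_add_f : β' e (e + f) = 1

namespace LatticeGluing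

variable {L L' : Type*} [AddCommGroup L] [AddCommGroup L']
  {β : BilinForm ℤ L} {β' : BilinForm ℤ L'} (D : LatticeGluing β β')

lemma ι_injective : Function.Injective D.ι :=
  Function.LeftInverse.injective D.π_ι

lemma ι_π_of_orthogonal {y : L'} (hy : β' y (D.e + D.f) = 0) : D.ι (D.π y) = y := by
  simpa [hy] using D.ι_π_add_smul y

lemma exists_eq_ι_add_smul_e (y : L') : ∃ (x : L) (c : ℤ), y = D.ι x + c • D.e :=
  ⟨_, _, (D.ι_π_add_smul y).symm⟩

lemma π_e : D.π D.e = 0 := by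
  have h := D.ι_π_add_smul D.e
  rw [D.e_apply_e_add_f, one_smul, add_eq_right] at h
  exact D.ι_injective (h.trans (map_zero D.ι).symm)

lemma two_smul_e : (2 : ℤ) • D.e = D.e + D.f + D.ι D.v := by
  rw [D.ι_v]; module

lemma apply_ι_add_ι (x y : L) : β' (D.ι x) (D.e + D.f + D.ι y) = β x y := by
  rw [map_add, D.ι_orthogonal, zero_add, D.isometry]

lemma apply_add_ι_add_ι (x y : L) :
    β' (D.e + D.f + D.ι x) (D.e + D.f + D.ι y) = β' (D.e + D.f) (D.e + D.f) + β x y := by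
  rw [LinearMap.map_add₂, apply_ι_add_ι, map_add, D.isSymm.eq (D.e + D.f) (D.ι y),
    D.ι_orthogonal, add_zero]

lemma linearMap_ext {φ ψ : L' →ₗ[ℤ] L'} (hι : ∀ x, φ (D.ι x) = ψ (D.ι x)) (he : φ D.e = ψ D.e) :
    φ = ψ := by
  ext y
  obtain ⟨x, c, rfl⟩ := D.exists_eq_ι_add_smul_e y
  simp only [map_add, map_zsmul, hι, he]

/-- As `2 e = w + ι v`, an extension of `g` fixing `w` has to send `e` to `e + ι h`, where
`2 h = g v - v`. -/
def extend (g : L →ₗ[ℤ] L) (h : L) : L' →ₗ[ℤ] L' :=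
  D.ι ∘ₗ g ∘ₗ D.π + (β'.flip (D.e + D.f)).smulRight (D.e + D.ι h)

variable {D}

lemma extend_apply (g : L →ₗ[ℤ] L) (h : L) (y : L') :
    D.extend g h y = D.ι (g (D.π y)) + β' y (D.e + D.f) • (D.e + D.ι h) :=
  rfl

@[simp]
lemma extend_ι (g : L →ₗ[ℤ] L) (h x : L) : D.extend g h (D.ι x) = D.ι (g x) := by
  rw [extend_apply, D.π_ι, D.ι_orthogonal, zero_smul, add_zero]

@[simp]
lemma extend_e (g : L →ₗ[ℤ] L) (h : L) : D.extend g h D.e = D.e + D.ι h := by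
  rw [extend_apply, D.π_e, map_zero, map_zero, D.e_apply_e_add_f, one_smul, zero_add]

lemma extend_comp (g g' : L →ₗ[ℤ] L) (h h' : L) :
    D.extend (g ∘ₗ g') (h + g h') = D.extend g h ∘ₗ D.extend g' h' :=
  D.linearMap_ext (fun x => by simp) (by simp [add_assoc])

lemma extend_id : D.extend LinearMap.id 0 = LinearMap.id :=
  D.linearMap_ext (fun x => by simp) (by simp)

lemma two_smul_e_add_ι {g : L →ₗ[ℤ] L} {h : L} (hh : (2 : ℤ) • h = g D.v - D.v) :
    (2 : ℤ) • (D.e + D.ι h) = D.e + D.f + D.ι (g D.v) := by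
  rw [smul_add, D.two_smul_e, ← map_zsmul, hh, map_sub]; abel

lemma extend_e_add_f {g : L →ₗ[ℤ] L} {h : L} (hh : (2 : ℤ) • h = g D.v - D.v) :
    D.extend g h (D.e + D.f) = D.e + D.f := by
  rw [show D.e + D.f = (2 : ℤ) • D.e - D.ι D.v by rw [D.two_smul_e]; abel, map_sub,
    map_zsmul, extend_e, extend_ι, two_smul_e_add_ι hh, D.two_smul_e]
  abel

lemma extend_isometry {g : L →ₗ[ℤ] L} {h : L} (hg : ∀ x y, β (g x) (g y) = β x y)
    (hh : (2 : ℤ) • h = g D.v - D.v) (y y' : L') :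
    β' (D.extend g h y) (D.extend g h y') = β' y y' := by
  obtain ⟨x, c, rfl⟩ := D.exists_eq_ι_add_smul_e y
  obtain ⟨x', c', rfl⟩ := D.exists_eq_ι_add_smul_e y'
  have h2 := two_smul_e_add_ι hh
  have hy : ∀ (z : L) (k : ℤ), D.extend g h (D.ι z + k • D.e) = D.ι (g z) + k • (D.e + D.ι h) :=
    fun z k => by rw [map_add, map_zsmul, extend_ι, extend_e]
  rw [hy, hy]
  generalize D.e + D.ι h = a at h2 ⊢
  have ha : ∀ z, β' (D.ι (g z)) a = β' (D.ι z) D.e := fun z => by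
    refine mul_left_cancel₀ (two_ne_zero' ℤ) ?_
    calc 2 * β' (D.ι (g z)) a = β' (D.ι (g z)) ((2 : ℤ) • a) := by rw [map_zsmul, smul_eq_mul]
      _ = β z D.v := by rw [h2, apply_ι_add_ι, hg]
      _ = β' (D.ι z) ((2 : ℤ) • D.e) := by rw [D.two_smul_e, apply_ι_add_ι]
      _ = 2 * β' (D.ι z) D.e := by rw [map_zsmul, smul_eq_mul]
  have haa : β' a a = β' D.e D.e := by
    refine mul_left_cancel₀ (four_ne_zero' ℤ) ?_
    calc 4 * β' a a = β' ((2 : ℤ) • a) ((2 : ℤ) • a) := by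
          rw [LinearMap.map_smul₂, map_zsmul, smul_eq_mul, smul_eq_mul]; ring
      _ = β' (D.e + D.f) (D.e + D.f) + β D.v D.v := by rw [h2, apply_add_ι_add_ι, hg]
      _ = β' ((2 : ℤ) • D.e) ((2 : ℤ) • D.e) := by rw [D.two_smul_e, apply_add_ι_add_ι]
      _ = 4 * β' D.e D.e := by
          rw [LinearMap.map_smul₂, map_zsmul, smul_eq_mul, smul_eq_mul]; ring
  simp only [map_add, map_zsmul, LinearMap.add_apply, LinearMap.smul_apply, smul_eq_mul,
    D.isSymm.eq a (D.ι _), D.isSymm.eq D.e (D.ι _), ha, haa, D.isometry, hg]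

lemma ι_two_smul_π_add_smul (y : L') :
    D.ι ((2 : ℤ) • D.π y + β' y (D.e + D.f) • D.v)
      = (2 : ℤ) • y - β' y (D.e + D.f) • (D.e + D.f) := by
  rw [map_add, map_zsmul, map_zsmul, D.ι_v]
  linear_combination (norm := module) (2 : ℤ) • D.ι_π_add_smul y

theorem mem_range_of_smul_mem_range {y : L'} {c : ℤ} (hc : c ≠ 0)
    (hy : c • y ∈ LinearMap.range D.ι) : y ∈ LinearMap.range D.ι := by
  obtain ⟨x, hx⟩ := hy
  have h : c * β' y (D.e + D.f) = 0 := by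
    rw [← smul_eq_mul, ← LinearMap.map_smul₂, ← hx, D.ι_orthogonal]
  exact ⟨D.π y, D.ι_π_of_orthogonal ((mul_eq_zero.1 h).resolve_left hc)⟩

theorem coinvariant_eq (G : Subgroup (L ≃ₗ[ℤ] L)) (ρ : G →* (L' ≃ₗ[ℤ] L'))
    (hι : ∀ (g : G) (x : L), ρ g (D.ι x) = D.ι ((g : L ≃ₗ[ℤ] L) x))
    (hw : ∀ g : G, ρ g (D.e + D.f) = D.e + D.f) :
    { y : L' | ∀ t : L', (∀ g : G, ρ g t = t) → β' y t = 0 } =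
      D.ι '' { x : L | ∀ t : L, (∀ g ∈ G, g t = t) → β x t = 0 } := by
  ext y
  constructor
  · intro hy
    have hyw : β' y (D.e + D.f) = 0 := hy _ hw
    refine ⟨D.π y, fun t ht => ?_, D.ι_π_of_orthogonal hyw⟩
    rw [← D.isometry, D.ι_π_of_orthogonal hyw]
    exact hy _ fun g => by rw [hι, ht g g.2]
  · rintro ⟨x, hx, rfl⟩ t ht
    set c := β' t (D.e + D.f)
    -- `2 t = ι s + c w` with `s` fixed by `G`
    have hs := D.ι_two_smul_π_add_smul t
    have hfix : ∀ g ∈ G, g ((2 : ℤ) • D.π t + c • D.v) = (2 : ℤ) • D.π t + c • D.v :=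
      fun g hg => D.ι_injective (by
        rw [← hι ⟨g, hg⟩, hs, map_sub, map_zsmul, map_zsmul, ht, hw])
    refine mul_left_cancel₀ (two_ne_zero' ℤ) ?_
    calc 2 * β' (D.ι x) t = β' (D.ι x) ((2 : ℤ) • t - c • (D.e + D.f)) := by
          rw [map_sub, map_zsmul, map_zsmul, D.ι_orthogonal, smul_zero, sub_zero, smul_eq_mul]
      _ = 2 * 0 := by rw [← hs, D.isometry, hx _ hfix, mul_zero]

section Group

variable (D) (G : Subgroup (L ≃ₗ[ℤ] L)) (hpar : ∀ g ∈ G, ∃ h : L, (2 : ℤ) • h = g D.v - D.v)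

noncomputable def half (g : G) : L :=
  (hpar g g.2).choose

lemma two_smul_half (g : G) : (2 : ℤ) • D.half G hpar g = (g : L ≃ₗ[ℤ] L) D.v - D.v :=
  (hpar g g.2).choose_spec

variable [IsAddTorsionFree L]

lemma half_one : D.half G hpar 1 = 0 :=
  zsmul_right_injective (two_ne_zero' ℤ) (by simp [two_smul_half])

lemma half_mul (g g' : G) :
    D.half G hpar (g * g') = D.half G hpar g + (g : L ≃ₗ[ℤ] L) (D.half G hpar g') := by
  refine zsmul_right_injective (two_ne_zero' ℤ) ?_
  simp only [smul_add, ← map_zsmul, two_smul_half, Subgroup.coe_mul, LinearEquiv.mul_apply,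
    map_sub]
  abel

noncomputable def extendHom : G →* (L' ≃ₗ[ℤ] L') :=
  (LinearMap.GeneralLinearGroup.generalLinearEquiv ℤ L').toMonoidHom.comp <|
    MonoidHom.toHomUnits
      { toFun := fun g => D.extend (g : L ≃ₗ[ℤ] L) (D.half G hpar g)
        map_one' := by rw [half_one]; exact extend_id
        map_mul' := fun g g' => by rw [half_mul]; exact extend_comp _ _ _ _ }

lemma extendHom_ι (g : G) (x : L) :
    D.extendHom G hpar g (D.ι x) = D.ι ((g : L ≃ₗ[ℤ] L) x) :=
  extend_ι _ _ x

lemma extendHom_e_add_f (g : G) : D.extendHom G hpar g (D.e + D.f) = D.e + D.f :=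
  extend_e_add_f (D.two_smul_half G hpar g)

lemma extendHom_isometry (hG : ∀ g ∈ G, ∀ x y, β (g x) (g y) = β x y) (g : G) (y y' : L') :
    β' (D.extendHom G hpar g y) (D.extendHom G hpar g y') = β' y y' :=
  extend_isometry (hG g g.2) (D.two_smul_half G hpar g) y y'

end Group

end LatticeGluing

/-- `hdual` says that `L ∩ 2 L^∨ ⊆ 2 L + ℤ v`. An isometry preserves `2 L^∨`, so
`g v = 2 m + k v`, and comparing `(g v)² = v²` forces `k` to be odd. -/
theorem exists_two_smul_eq_sub_of_isometry {L : Type*} [AddCommGroup L] {β : BilinForm ℤ L}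
    (hβ : β.IsSymm) {v : L} (hvv : β v v = -2) (hv : ∀ y, 2 ∣ β y v)
    (hdual : ∀ x, (∀ y, 2 ∣ β y x) → ∃ (m : L) (k : ℤ), x = (2 : ℤ) • m + k • v)
    (g : L ≃ₗ[ℤ] L) (hg : ∀ x y, β (g x) (g y) = β x y) :
    ∃ h : L, (2 : ℤ) • h = g v - v := by
  obtain ⟨m, k, hm⟩ := hdual (g v) fun y => by
    have h := hv (g.symm y)
    rwa [← hg, LinearEquiv.apply_symm_apply] at h
  obtain ⟨t, ht⟩ := hv m
  have hk : Odd (k * k) := by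
    refine ⟨β m m + 2 * k * t, ?_⟩
    have h := hg v v
    rw [hvv, hm] at h
    simp only [map_add, map_zsmul, LinearMap.add_apply, LinearMap.smul_apply, smul_eq_mul, hvv,
      hβ.eq v m, ht] at h
    linarith
  obtain ⟨j, rfl⟩ := (Int.odd_mul.1 hk).1
  exact ⟨m + j • v, by rw [hm]; module⟩

def vIdx : IdxL := Sum.inr (Sum.inr (Sum.inr (Sum.inr (Sum.inr 0))))

def eIdx : IdxL' := Sum.inr (Sum.inr (Sum.inr (Sum.inl 0)))

def fIdx : IdxL' := Sum.inr (Sum.inr (Sum.inr (Sum.inl 1)))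

def vL : ML := Pi.single vIdx 1

def eL' : ML' := Pi.single eIdx 1

def fL' : ML' := Pi.single fIdx 1

def embMatrix : Matrix IdxL' IdxL ℤ := Matrix.of fun j i =>
  match j, i with
  | .inl a, .inl b => if a = b then 1 else 0
  | .inr (.inl a), .inr (.inl b) => if a = b then 1 else 0
  | .inr (.inr (.inl a)), .inr (.inr (.inl b)) => if a = b then 1 else 0
  | .inr (.inr (.inr (.inl a))), .inr (.inr (.inr (.inr (.inr _)))) =>
      if a = 0 then 1 else -1
  | .inr (.inr (.inr (.inr (.inl a)))), .inr (.inr (.inr (.inl b))) =>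
      if a = b then 1 else 0
  | .inr (.inr (.inr (.inr (.inr a)))), .inr (.inr (.inr (.inr (.inl b)))) =>
      if a = b then 1 else 0
  | _, _ => 0

def projMatrix : Matrix IdxL IdxL' ℤ := Matrix.of fun i j =>
  match i, j with
  | .inl a, .inl b => if a = b then 1 else 0
  | .inr (.inl a), .inr (.inl b) => if a = b then 1 else 0
  | .inr (.inr (.inl a)), .inr (.inr (.inl b)) => if a = b then 1 else 0
  | .inr (.inr (.inr (.inl a))), .inr (.inr (.inr (.inr (.inl b)))) =>
      if a = b then 1 else 0
  | .inr (.inr (.inr (.inr (.inl a)))), .inr (.inr (.inr (.inr (.inr b)))) =>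
      if a = b then 1 else 0
  | .inr (.inr (.inr (.inr (.inr _)))), .inr (.inr (.inr (.inl b))) =>
      if b = 1 then -1 else 0
  | _, _ => 0

def E8NInv : Matrix (Fin 8) (Fin 8) ℤ :=
  !![ -4,  -5,  -7, -10,  -8,  -6,  -4,  -2;
      -5,  -8, -10, -15, -12,  -9,  -6,  -3;
      -7, -10, -14, -20, -16, -12,  -8,  -4;
     -10, -15, -20, -30, -24, -18, -12,  -6;
      -8, -12, -16, -24, -20, -15, -10,  -5;
      -6,  -9, -12, -18, -15, -12,  -8,  -4;
      -4,  -6,  -8, -12, -10,  -8,  -6,  -3;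
      -2,  -3,  -4,  -6,  -5,  -4,  -3,  -2]

def quasiInvBL : Matrix IdxL IdxL ℤ :=
  Matrix.fromBlocks UMat 0 0 (Matrix.fromBlocks UMat 0 0
    (Matrix.fromBlocks UMat 0 0 (Matrix.fromBlocks E8NInv 0 0
      (Matrix.fromBlocks E8NInv 0 0 !![-1]))))

lemma embMatrix_transpose_mul_BL'_mul : embMatrixᵀ * BL' * embMatrix = BL := by decide

lemma projMatrix_mul_embMatrix : projMatrix * embMatrix = 1 := by decide

lemma embMatrix_mul_projMatrix_add :
    embMatrix * projMatrix + vecMulVec eL' (BL' *ᵥ (eL' + fL')) = 1 := by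
  decide

lemma embMatrix_mulVec_vL : embMatrix *ᵥ vL = eL' - fL' := by decide

lemma embMatrix_transpose_mulVec_BL'_mulVec_eL'_add_fL' :
    embMatrixᵀ *ᵥ (BL' *ᵥ (eL' + fL')) = 0 := by
  decide

lemma eL'_dotProduct_BL'_mulVec : eL' ⬝ᵥ BL' *ᵥ (eL' + fL') = 1 := by decide

lemma BL'_isSymm : BL'.IsSymm := by unfold Matrix.IsSymm; decide

lemma BL_isSymm : BL.IsSymm := by unfold Matrix.IsSymm; decide

lemma vL_dotProduct_BL_mulVec : vL ⬝ᵥ BL *ᵥ vL = -2 := by decide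

lemma BL_mulVec_vL : BL *ᵥ vL = (-2 : ℤ) • vL := by decide

lemma quasiInvBL_mul_BL : quasiInvBL * BL = 1 + vecMulVec vL vL := by decide

lemma latForm_eq_toBilin' {ι : Type} [Fintype ι] [DecidableEq ι] (B : Matrix ι ι ℤ)
    (x y : ι → ℤ) : latForm B x y = Matrix.toBilin' B x y :=
  (Matrix.toBilin'_apply' B x y).symm

noncomputable def gluingLL' : LatticeGluing (Matrix.toBilin' BL) (Matrix.toBilin' BL') where
  ι := Matrix.toLin' embMatrix
  π := Matrix.toLin' projMatrix
  v := vL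
  e := eL'
  f := fL'
  isSymm := Matrix.isSymm_toBilin'_iff_isSymm.2 BL'_isSymm
  isometry x y := by
    rw [← LinearMap.BilinForm.comp_apply, Matrix.toBilin'_comp,
      embMatrix_transpose_mul_BL'_mul]
  π_ι x := by
    rw [Matrix.toLin'_apply, Matrix.toLin'_apply, mulVec_mulVec, projMatrix_mul_embMatrix,
      one_mulVec]
  ι_π_add_smul y := by
    have h := congrArg (· *ᵥ y) embMatrix_mul_projMatrix_add
    simpa [add_mulVec, vecMulVec_mulVec, mulVec_mulVec, Matrix.toBilin'_apply', dotProduct_comm]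
      using h
  ι_v := embMatrix_mulVec_vL
  ι_orthogonal x := by
    rw [Matrix.toBilin'_apply', Matrix.toLin'_apply, dotProduct_comm, dotProduct_mulVec,
      ← mulVec_transpose, embMatrix_transpose_mulVec_BL'_mulVec_eL'_add_fL', zero_dotProduct]
  e_apply_e_add_f := by rw [Matrix.toBilin'_apply']; exact eL'_dotProduct_BL'_mulVec

lemma exists_eq_two_smul_add_smul_vL (x : ML) (hx : ∀ y, 2 ∣ Matrix.toBilin' BL y x) :
    ∃ (m : ML) (k : ℤ), x = (2 : ℤ) • m + k • vL := by
  have hBx : ∀ j, 2 ∣ (BL *ᵥ x) j := fun j => by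
    simpa [Matrix.toBilin'_apply', single_dotProduct] using hx (Pi.single j 1)
  choose z hz using hBx
  have hKx : x + (vL ⬝ᵥ x) • vL = (2 : ℤ) • (quasiInvBL *ᵥ z) := by
    rw [← mulVec_smul, show (2 : ℤ) • z = BL *ᵥ x from funext fun j => (hz j).symm,
      mulVec_mulVec, quasiInvBL_mul_BL, add_mulVec, one_mulVec, vecMulVec_mulVec,
      op_smul_eq_smul]
  exact ⟨quasiInvBL *ᵥ z, -(vL ⬝ᵥ x), by rw [← hKx]; module⟩

lemma exists_two_smul_eq_sub_vL (g : ML ≃ₗ[ℤ] ML)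
    (hg : ∀ x y, Matrix.toBilin' BL (g x) (g y) = Matrix.toBilin' BL x y) :
    ∃ h : ML, (2 : ℤ) • h = g vL - vL := by
  refine exists_two_smul_eq_sub_of_isometry (Matrix.isSymm_toBilin'_iff_isSymm.2 BL_isSymm)
    ?_ (fun y => ?_) exists_eq_two_smul_add_smul_vL g hg
  · rw [Matrix.toBilin'_apply']; exact vL_dotProduct_BL_mulVec
  · rw [Matrix.toBilin'_apply', BL_mulVec_vL, dotProduct_smul, smul_eq_mul]
    exact dvd_mul_of_dvd_left (by norm_num) _

/-- For any subgroup `G` of the isometry group `O(L)` of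
`L = U³ ⊕ E8(-1)² ⊕ (-2)` there are a primitive embedding `ι : L → L'` into
`L' = U⁴ ⊕ E8(-1)²` and an extension `ρ` of the `G`-action to isometries of
`L'` (compatible with `ι`) such that `S_G(L') = ι (S_G(L))`. -/
theorem extend_isometries (G : Subgroup (ML ≃ₗ[ℤ] ML))
    (hG : ∀ g ∈ G, ∀ x y : ML, latForm BL (g x) (g y) = latForm BL x y) :
    ∃ (emb : ML →ₗ[ℤ] ML') (ρ : G →* (ML' ≃ₗ[ℤ] ML')),
      -- `emb` is a primitive embedding of lattices:
      Function.Injective emb ∧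
      (∀ x y : ML, latForm BL' (emb x) (emb y) = latForm BL x y) ∧
      (∀ (x : ML') (c : ℤ), c ≠ 0 → c • x ∈ LinearMap.range emb →
        x ∈ LinearMap.range emb) ∧
      -- `ρ` extends the `G`-action by isometries of `L'`:
      (∀ g : G, ∀ x y : ML', latForm BL' (ρ g x) (ρ g y) = latForm BL' x y) ∧
      (∀ g : G, ∀ x : ML, ρ g (emb x) = emb ((g : ML ≃ₗ[ℤ] ML) x)) ∧
      -- the co-invariant lattices agree: `S_G(L') = emb (S_G(L))`
      ({ y : ML' | ∀ t : ML', (∀ g : G, ρ g t = t) → latForm BL' y t = 0 } =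
        emb '' { x : ML | ∀ t : ML, (∀ g ∈ G, g t = t) → latForm BL x t = 0 }) := by
  simp only [latForm_eq_toBilin'] at hG ⊢
  let D := gluingLL'
  have hpar (g) (hg : g ∈ G) : ∃ h : ML, (2 : ℤ) • h = g D.v - D.v :=
    exists_two_smul_eq_sub_vL g (hG g hg)
  exact ⟨D.ι, D.extendHom G hpar, D.ι_injective, D.isometry,
    fun _ _ hc => D.mem_range_of_smul_mem_range hc, D.extendHom_isometry G hpar hG,
    D.extendHom_ι G hpar, D.coinvariant_eq G _ (D.extendHom_ι G hpar) (D.extendHom_e_add_f G hpar)⟩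
end

section
/- Let w = (70, 0, 1, 2, 3, ..., 24) ∈ II_{1,25} (so w is the vector whose 0-th coordinate is 70 and whose i-th coordinate is i−1 for 1 ≤ i ≤ 25; it satisfies w·w = 0). Then there is no vector x ∈ II_{1,25} with x·w = 0 and x·x = −2. (Equivalently, the quotient lattice (w^⊥ ∩ II_{1,25})/ℤw — the Leech lattice — contains no vectors of square −2.) -/
/-!
Write `x = y / 2` with `y` integral. Since `w` is isotropic and `x ⊥ w`, the vector
`x - (x₀ / 70) w` has time coordinate `0` and still has norm `-2`; scaled by `140` its spatial
part is an integer vector `e ∈ ℤ²⁵` with `|e|² = 39200`, orthogonal to `(0, 1, …, 24)`, with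
`eᵢ ≡ y₀ (70 - i) (mod 140)` and a condition on `∑ eᵢ` modulo `280`. These conditions only
depend on `y₀ mod 140`, and each `eᵢ` has at most four possible values, so a pruned exhaustive
search over the `140` residues shows that no such `e` exists.
-/

/-- The Lorentzian bilinear form of signature `(1, 25)`. -/
def lorentzDot (x y : Fin 26 → ℚ) : ℚ :=
  x 0 * y 0 - ∑ i : Fin 25, x i.succ * y i.succ

/-- Membership in the even unimodular Lorentzian lattice `II₁,₂₅ ⊂ ℚ²⁶`. -/
def MemII (x : Fin 26 → ℚ) : Prop :=
  ((∀ i, ∃ n : ℤ, x i = n) ∨ (∀ i, ∃ n : ℤ, x i = n + 1 / 2)) ∧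
  (∃ k : ℤ, x 0 - ∑ i : Fin 25, x i.succ = 2 * k)

/-- The isotropic vector `w = (70, 0, 1, 2, …, 24)`. -/
def w : Fin 26 → ℚ := fun i => if i = 0 then 70 else ((i : ℕ) : ℚ) - 1

open Finset

theorem MemII.exists_eq_half {x : Fin 26 → ℚ} (hx : MemII x) :
    ∃ y : Fin 26 → ℤ, (∀ i, x i = y i / 2) ∧ (∀ i, y i ≡ y 0 [ZMOD 2]) ∧
      y 0 ≡ ∑ i : Fin 25, y i.succ [ZMOD 4] := by
  obtain ⟨hcoord, k, hk⟩ := hx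
  obtain ⟨y, hy, hpar⟩ : ∃ y : Fin 26 → ℤ, (∀ i, x i = y i / 2) ∧ ∀ i, y i ≡ y 0 [ZMOD 2] := by
    rcases hcoord with h | h <;> choose n hn using h
    · exact ⟨fun i => 2 * n i, fun i => by rw [hn]; push_cast; ring,
        fun i => by simp [Int.ModEq]⟩
    · exact ⟨fun i => 2 * n i + 1, fun i => by rw [hn]; push_cast; ring,
        fun i => by simp [Int.ModEq, Int.add_emod]⟩
  refine ⟨y, hy, hpar, Int.modEq_iff_dvd.2 ⟨-k, ?_⟩⟩
  simp only [hy, ← sum_div] at hk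
  exact_mod_cast (by push_cast; linarith : ((∑ i : Fin 25, y i.succ - y 0 : ℤ) : ℚ) = 4 * -k)

theorem lorentzDot_w (x : Fin 26 → ℚ) :
    lorentzDot x w = 70 * x 0 - ∑ i : Fin 25, (i : ℚ) * x i.succ := by
  have hw : ∀ i : Fin 25, w i.succ = i := fun i => by simp [w]
  simp only [lorentzDot, hw, mul_comm (x _)]
  simp [w]

/-- `(y₀, v)` are the coordinates of `2x` for a root `x ∈ II₁,₂₅` orthogonal to `w`. -/
structure IsDoubledRoot (y₀ : ℤ) (v : Fin 25 → ℤ) : Prop where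
  parity : ∀ i, v i ≡ y₀ [ZMOD 2]
  sum_modEq : y₀ ≡ ∑ i, v i [ZMOD 4]
  orthogonal : ∑ i : Fin 25, (i : ℤ) * v i = 70 * y₀
  norm : ∑ i, v i ^ 2 = y₀ ^ 2 + 8

theorem exists_isDoubledRoot {x : Fin 26 → ℚ} (hx : MemII x) (hxw : lorentzDot x w = 0)
    (hxx : lorentzDot x x = -2) : ∃ y₀ v, IsDoubledRoot y₀ v := by
  obtain ⟨y, hy, hpar, hsum⟩ := hx.exists_eq_half
  refine ⟨y 0, fun i => y i.succ, fun i => hpar i.succ, hsum, ?_, ?_⟩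
  · rw [lorentzDot_w] at hxw
    simp only [hy, mul_div_assoc', ← sum_div] at hxw
    exact_mod_cast
      (by push_cast; linarith : ((∑ i : Fin 25, (i : ℤ) * y i.succ : ℤ) : ℚ) = 70 * y 0)
  · rw [lorentzDot] at hxx
    simp only [hy, ← sq, div_pow, ← sum_div] at hxx
    exact_mod_cast (by push_cast; linarith : ((∑ i : Fin 25, y i.succ ^ 2 : ℤ) : ℚ) = y 0 ^ 2 + 8)

/-- `140` times the spatial part of `x - (x₀ / 70) w`, for `2x = (y₀, v)`. -/
def displacement (y₀ : ℤ) (v : Fin 25 → ℤ) (i : Fin 25) : ℤ := 70 * v i - i * y₀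

theorem sum_fin25_val : ∑ i : Fin 25, (i : ℤ) = 300 := by decide

theorem sum_fin25_val_sq : ∑ i : Fin 25, (i : ℤ) ^ 2 = 4900 := by decide

namespace IsDoubledRoot

variable {y₀ : ℤ} {v : Fin 25 → ℤ}

theorem sum_displacement_sq (h : IsDoubledRoot y₀ v) :
    ∑ i, displacement y₀ v i ^ 2 = 39200 := by
  have expand : ∑ i, displacement y₀ v i ^ 2 = 4900 * ∑ i, v i ^ 2
      - 140 * y₀ * ∑ i : Fin 25, (i : ℤ) * v i + y₀ ^ 2 * ∑ i : Fin 25, (i : ℤ) ^ 2 := by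
    simp only [mul_sum, ← sum_sub_distrib, ← sum_add_distrib]
    exact sum_congr rfl fun i _ => by rw [displacement]; ring
  rw [expand, h.norm, h.orthogonal, sum_fin25_val_sq]
  ring

theorem sum_mul_displacement (h : IsDoubledRoot y₀ v) :
    ∑ i : Fin 25, (i : ℤ) * displacement y₀ v i = 0 := by
  have expand : ∑ i : Fin 25, (i : ℤ) * displacement y₀ v i
      = 70 * ∑ i : Fin 25, (i : ℤ) * v i - y₀ * ∑ i : Fin 25, (i : ℤ) ^ 2 := by
    simp only [mul_sum, ← sum_sub_distrib]
    exact sum_congr rfl fun i _ => by rw [displacement]; ring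
  rw [expand, h.orthogonal, sum_fin25_val_sq]
  ring

theorem displacement_modEq (h : IsDoubledRoot y₀ v) (i : Fin 25) :
    displacement y₀ v i ≡ y₀ % 140 * (70 - i) [ZMOD 140] :=
  calc displacement y₀ v i ≡ 70 * y₀ - i * y₀ [ZMOD 140] :=
        ((h.parity i).mul_left' (c := 70)).sub_right _
    _ = y₀ * (70 - i) := by ring
    _ ≡ y₀ % 140 * (70 - i) [ZMOD 140] := ((Int.mod_modEq y₀ 140).symm).mul_right _

theorem sum_displacement_modEq (h : IsDoubledRoot y₀ v) :
    230 * (y₀ % 140) + ∑ i, displacement y₀ v i ≡ 0 [ZMOD 280] := by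
  have expand : ∑ i, displacement y₀ v i = 70 * ∑ i, v i - 300 * y₀ := by
    simp only [displacement, sum_sub_distrib, ← mul_sum, ← sum_mul, sum_fin25_val]
  have hsum := h.sum_modEq
  rw [Int.ModEq] at hsum ⊢
  omega

end IsDoubledRoot

def residueCandidates (r : ℤ) : List ℤ := [r - 280, r - 140, r, r + 140]

theorem mem_residueCandidates {e r : ℤ} (he : e ≡ r [ZMOD 140]) (hsq : e ^ 2 ≤ 39200) :
    e ∈ residueCandidates (r % 140) := by
  have hle : e ≤ 197 := by nlinarith
  have hge : -197 ≤ e := by nlinarith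
  simp only [residueCandidates, List.mem_cons, List.not_mem_nil, or_false]
  rw [Int.ModEq] at he
  omega

def minSq (r : ℤ) : ℤ := min r (140 - r) ^ 2

theorem minSq_le {e r : ℤ} (he : e ≡ r [ZMOD 140]) : minSq (r % 140) ≤ e ^ 2 := by
  rw [Int.ModEq] at he
  have hm : 0 ≤ min (r % 140) (140 - r % 140) ∧
      (min (r % 140) (140 - r % 140) ≤ e ∨ min (r % 140) (140 - r % 140) ≤ -e) := by omega
  obtain ⟨h0, h | h⟩ := hm <;> rw [minSq] <;> nlinarith

def minSqSum (rs : List ℤ) : ℤ := (rs.map fun r => minSq (r % 140)).sum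

def rootSearch : List ℤ → ℤ → ℤ → ℤ → ℤ → Bool
  | [], _, B, s₁, s₂ => B == 0 && s₁ == 0 && s₂ % 280 == 0
  | r :: rs, i, B, s₁, s₂ =>
    (residueCandidates (r % 140)).any fun e =>
      decide (e ^ 2 + minSqSum rs ≤ B) &&
        rootSearch rs (i + 1) (B - e ^ 2) (s₁ + i * e) (s₂ + e)

theorem rootSearch_ofFn {n : ℕ} (e r : Fin n → ℤ) (hr : ∀ j, e j ≡ r j [ZMOD 140])
    (i B s₁ s₂ : ℤ) (hB : B ≤ 39200) (hsq : ∑ j, e j ^ 2 = B)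
    (hlin : s₁ + ∑ j, (i + j) * e j = 0) (hsum : s₂ + ∑ j, e j ≡ 0 [ZMOD 280]) :
    rootSearch (List.ofFn r) i B s₁ s₂ = true := by
  induction n generalizing i B s₁ s₂ with
  | zero =>
    simp only [univ_eq_empty, sum_empty, add_zero] at hsq hlin hsum
    simpa [rootSearch, ← hsq, hlin] using Int.modEq_zero_iff_dvd.1 hsum
  | succ n ih =>
    rw [Fin.sum_univ_succ] at hsq hlin hsum
    have htail : 0 ≤ ∑ j : Fin n, e j.succ ^ 2 := sum_nonneg fun j _ => sq_nonneg _
    rw [List.ofFn_succ, rootSearch, List.any_eq_true]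
    refine ⟨e 0, mem_residueCandidates (hr 0) (by linarith), ?_⟩
    rw [Bool.and_eq_true, decide_eq_true_eq]
    constructor
    · have : minSqSum (List.ofFn fun j => r j.succ) ≤ ∑ j : Fin n, e j.succ ^ 2 := by
        rw [minSqSum, List.map_ofFn, List.sum_ofFn]
        exact sum_le_sum fun j _ => minSq_le (hr j.succ)
      omega
    · refine ih (fun j => e j.succ) (fun j => r j.succ) (fun j => hr j.succ) _ _ _ _
        (by linarith [sq_nonneg (e 0)]) (by omega) ?_ ?_
      · have hshift : ∑ j : Fin n, (i + ((j.succ : ℕ) : ℤ)) * e j.succ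
            = ∑ j : Fin n, (i + 1 + (j : ℕ)) * e j.succ :=
          sum_congr rfl fun j _ => by rw [Fin.val_succ]; push_cast; ring
        simp only [hshift, Fin.val_zero, Nat.cast_zero, add_zero] at hlin
        linear_combination hlin
      · simpa only [add_assoc] using hsum

set_option maxRecDepth 100000 in
theorem rootSearch_eq_false : ∀ c : ℕ, c < 140 →
    rootSearch (List.ofFn fun i : Fin 25 => (c : ℤ) * (70 - i)) 0 39200 0 (230 * c) = false := by
  decide

/-- There is no vector `x ∈ II₁,₂₅` with `x·w = 0` and `x·x = -2`; equivalently
the Leech lattice `(w^⊥ ∩ II₁,₂₅)/ℤw` has no vectors of square `-2`. -/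
theorem leech_no_roots :
    ¬ ∃ x : Fin 26 → ℚ, MemII x ∧ lorentzDot x w = 0 ∧ lorentzDot x x = -2 := by
  rintro ⟨x, hx, hxw, hxx⟩
  obtain ⟨y₀, v, h⟩ := exists_isDoubledRoot hx hxw hxx
  set c := y₀ % 140
  have hc : (c.toNat : ℤ) = c := Int.toNat_of_nonneg (Int.emod_nonneg _ (by norm_num))
  have hfound := rootSearch_ofFn (displacement y₀ v) (fun i => c * (70 - i))
    h.displacement_modEq 0 39200 0 (230 * c) le_rfl h.sum_displacement_sq
    (by simpa using h.sum_mul_displacement) (by simpa using h.sum_displacement_modEq)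
  have hnone := rootSearch_eq_false c.toNat (by omega)
  rw [hc, hfound] at hnone
  exact Bool.noConfusion hnone
end

section
/- The lattice S₁₁, i.e., ℤ²⁰ equipped with the bilinear form given by the 20×20 Gram matrix M below, is negative definite: for every nonzero x ∈ ℤ²⁰ one has xᵀMx < 0. -/
/-!
Gaussian elimination on `-S11` never meets a non-positive pivot, i.e. `-S11 = Fᵀ D F` with `F`
upper triangular with nonzero diagonal and `D` diagonal with positive entries. Hence
`-xᵀ S11 x = ∑ₖ Dₖₖ (F x)ₖ²`, which vanishes only when `F x = 0`, that is, when `x = 0`.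
-/

open Matrix

/-- The Gram matrix of the lattice `S₁₁`. -/
def S11 : Matrix (Fin 20) (Fin 20) ℤ :=
  !![-4, 1, -2, -2, -1, 1, -1, 1, -1, -1, 2, 1, -1, 2, -1, -2, -2, 2, 1, -1;
     1, -4, -1, -1, -1, -1, -1, 1, -1, 2, -1, -2, 2, 0, -1, 0, 0, -1, -2, 1;
     -2, -1, -4, -2, -1, -1, 0, 1, 0, -1, 1, 0, -1, 2, -2, -1, -1, 0, 0, 1;
     -2, -1, -2, -4, 0, 0, -2, 0, -1, 0, 2, 1, 0, 1, 0, 0, -1, 1, 0, -1;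
     -1, -1, -1, 0, -4, 1, -1, 2, -2, -1, 1, 0, -1, 0, -2, -2, 0, 1, 1, -1;
     1, -1, -1, 0, 1, -4, 0, -1, 0, 1, -2, -1, 0, -1, -1, 0, -1, 0, -1, 1;
     -1, -1, 0, -2, -1, 0, -4, 1, -2, 1, 1, 1, 0, -1, 0, -1, 0, 2, 0, -2;
     1, 1, 1, 0, 2, -1, 1, -4, 0, 0, -1, 1, 1, 0, 2, 1, 0, -1, 1, 0;
     -1, -1, 0, -1, -2, 0, -2, 0, -4, 0, 0, 1, 1, 0, -1, -2, 0, 2, 0, -2;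
     -1, 2, -1, 0, -1, 1, 1, 0, 0, -4, 1, 1, -2, 1, 0, 0, 1, 1, 1, 0;
     2, -1, 1, 2, 1, -2, 1, -1, 0, 1, -4, -2, 2, -1, 0, 0, 0, -1, -2, 1;
     1, -2, 0, 1, 0, -1, 1, 1, 1, 1, -2, -4, 1, 0, -1, 0, -1, -1, -2, 2;
     -1, 2, -1, 0, -1, 0, 0, 1, 1, -2, 2, 1, -4, 0, -1, 0, 0, 1, 2, 0;
     2, 0, 2, 1, 0, -1, -1, 0, 0, 1, -1, 0, 0, -4, 1, 1, 1, 0, 0, -1;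
     -1, -1, -2, 0, -2, -1, 0, 2, -1, 0, 0, -1, -1, 1, -4, -2, -1, 1, 0, 0;
     -2, 0, -1, 0, -2, 0, -1, 1, -2, 0, 0, 0, 0, 1, -2, -4, -2, 2, 0, -1;
     -2, 0, -1, -1, 0, -1, 0, 0, 0, 1, 0, -1, 0, 1, -1, -2, -4, 1, 0, 0;
     2, -1, 0, 1, 1, 0, 2, -1, 2, 1, -1, -1, 1, 0, 1, 2, 1, -4, 0, 2;
     1, -2, 0, 0, 1, -1, 0, 1, 0, 1, -2, -2, 2, 0, 0, 0, 0, 0, -4, 1;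
     -1, 1, 1, -1, -1, 1, -2, 0, -2, 0, 1, 2, 0, -1, 0, -1, 0, 2, 1, -4]

namespace Matrix

variable {n : Type*} [Fintype n]

theorem mulVec_injective_of_isUpperTriangular {K : Type*} [Field K] [LinearOrder n]
    [DecidableEq n] {B : Matrix n n K} (hB : B.IsUpperTriangular) (hdiag : ∀ i, B i i ≠ 0) :
    Function.Injective B.mulVec := by
  refine mulVec_injective_of_isUnit <| (isUnit_iff_isUnit_det B).2 ?_
  rw [det_of_isUpperTriangular hB]
  exact (Finset.prod_ne_zero_iff.2 fun i _ ↦ hdiag i).isUnit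

theorem PosDef.of_map_intCast {K : Type*} [CommRing K] [LinearOrder K] [IsStrictOrderedRing K]
    [StarRing K] [TrivialStar K] {A : Matrix n n ℤ} (h : (A.map (Int.cast : ℤ → K)).PosDef) :
    A.PosDef := by
  rw [posDef_iff_dotProduct_mulVec] at h ⊢
  refine ⟨?_, fun x hx ↦ ?_⟩
  · ext i j
    simpa using congrFun₂ h.1 i j
  · have hx' : (Int.cast ∘ x : n → K) ≠ 0 := fun h0 ↦
      hx <| funext fun i ↦ by simpa using congrFun h0 i
    have hcast :
        ((x ⬝ᵥ A *ᵥ x : ℤ) : K) = (Int.cast ∘ x) ⬝ᵥ A.map Int.cast *ᵥ (Int.cast ∘ x) := by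
      rw [← eq_intCast (Int.castRingHom K), RingHom.map_dotProduct]
      congr 1
      ext i
      exact RingHom.map_mulVec _ A x i
    simpa only [star_trivial, ← hcast, Int.cast_pos] using h.2 hx'

end Matrix

/- The rows of `S11Factor` are the pivot rows of Gaussian elimination on `-S11`, each scaled to a
primitive integer vector; `S11Weights` are the pivots divided by the squares of these scalings. -/
def S11Factor : Matrix (Fin 20) (Fin 20) ℚ :=
  !![4, -1, 2, 2, 1, -1, 1, -1, 1, 1, -2, -1, 1, -2, 1, 2, 2, -2, -1, 1;
     0, 15, 6, 6, 5, 3, 5, -5, 5, -7, 2, 7, -7, -2, 5, 2, 2, 2, 7, -3;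
     0, 0, 12, 2, 0, 6, -5, 0, -5, 6, -1, -1, 6, -4, 5, -1, -1, 4, -1, -6;
     0, 0, 0, 14, -6, 0, 7, 6, 1, 0, -7, -7, 0, 2, -7, -7, -1, -2, -1, 6;
     0, 0, 0, 0, 122, -42, 35, -38, 59, 56, -49, -35, 56, 34, 35, 35, -31, -34, -59, 60;
     0, 0, 0, 0, 0, 162, 48, 42, 60, -33, 67, 13, 28, 78, 48, 48, 76, -78, 1, 30;
     0, 0, 0, 0, 0, 0, 201, -84, 15, -42, -17, -71, 34, 60, -15, 39, -89, -60, 7, 48;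
     0, 0, 0, 0, 0, 0, 0, 426, 168, 12, 91, -152, -182, -132, -168, 75, -32, 132, -203, 15;
     0, 0, 0, 0, 0, 0, 0, 0, 108, 28, 23, -47, -46, -24, 34, 33, -51, -47, 47, 35;
     0, 0, 0, 0, 0, 0, 0, 0, 0, 77, 25, 35, 4, -12, -28, -24, -30, -28, 37, -32;
     0, 0, 0, 0, 0, 0, 0, 0, 0, 0, 999, 259, -450, 272, 70, 313, 295, 147, 419, 443;
     0, 0, 0, 0, 0, 0, 0, 0, 0, 0, 0, 149, 18, -32, 68, 68, 59, -3, -8, -14;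
     0, 0, 0, 0, 0, 0, 0, 0, 0, 0, 0, 0, 3800, -1524, 1078, -1455, -822, 658, -977, -1747;
     0, 0, 0, 0, 0, 0, 0, 0, 0, 0, 0, 0, 0, 1012, -464, -485, -464, 346, -199, -139;
     0, 0, 0, 0, 0, 0, 0, 0, 0, 0, 0, 0, 0, 0, 714, -149, -298, -190, -347, 167;
     0, 0, 0, 0, 0, 0, 0, 0, 0, 0, 0, 0, 0, 0, 0, 2201, 832, -1094, 1091, -737;
     0, 0, 0, 0, 0, 0, 0, 0, 0, 0, 0, 0, 0, 0, 0, 0, 1040, -267, -287, -371;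
     0, 0, 0, 0, 0, 0, 0, 0, 0, 0, 0, 0, 0, 0, 0, 0, 0, 511, -109, -217;
     0, 0, 0, 0, 0, 0, 0, 0, 0, 0, 0, 0, 0, 0, 0, 0, 0, 0, 20, 7;
     0, 0, 0, 0, 0, 0, 0, 0, 0, 0, 0, 0, 0, 0, 0, 0, 0, 0, 0, 1]

def S11Weights : Fin 20 → ℚ :=
  ![1/4, 1/60, 1/60, 1/84, 1/5124, 1/9882, 1/21708, 1/85626, 1/7668, 1/4158, 1/923076,
    1/24138, 1/20949400, 1/961400, 1/722568, 1/6286056, 1/2289040, 1/531440, 11/10220, 11/20]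

theorem neg_S11_cast_eq :
    (-S11).map (Int.cast : ℤ → ℚ) = S11Factorᵀ * diagonal S11Weights * S11Factor := by
  decide +kernel

theorem posDef_neg_S11 : (-S11).PosDef := by
  refine PosDef.of_map_intCast (K := ℚ) ?_
  rw [neg_S11_cast_eq, ← conjTranspose_eq_transpose_of_trivial]
  exact (PosDef.diagonal (by decide +kernel)).conjTranspose_mul_mul_same
    (mulVec_injective_of_isUpperTriangular (by decide +kernel) (by decide +kernel))

/-- The lattice `S₁₁` is negative definite: `xᵀ M x < 0` for every nonzero
`x ∈ ℤ²⁰`. -/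
theorem S11_negDef : ∀ x : Fin 20 → ℤ, x ≠ 0 → x ⬝ᵥ S11.mulVec x < 0 := by
  intro x hx
  simpa [neg_mulVec] using posDef_neg_S11.dotProduct_mulVec_pos hx
end

section
/- Let T¹₁₁ be ℤ³ with the bilinear form given by the Gram matrix [[2,1,0],[1,6,0],[0,0,22]], and write Q(x) = (x,x). Then: (i) there exists x ∈ ℤ³ with Q(x) = 2 (so the minimal positive value of Q is 2, since the lattice is even positive definite); (ii) there is no primitive vector x ∈ ℤ³ with Q(x) ∈ {4, 12, 14, 16, 20}; (iii) the minimum of Q(f) over primitive vectors f ∈ ℤ³ of divisor 2 (i.e., such that (f,y) ∈ 2ℤ for all y ∈ ℤ³) is 22. -/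
open Matrix

/-!
Invariant polarizations of the twistor family `TW(X₁)`:  properties of the
positive definite even lattice `T¹₁₁` with Gram matrix
`[[2,1,0],[1,6,0],[0,0,22]]`.
-/

/-- The Gram matrix of `T¹₁₁`. -/
def T1 : Matrix (Fin 3) (Fin 3) ℤ := !![2, 1, 0; 1, 6, 0; 0, 0, 22]

/-- The bilinear form of `T¹₁₁`. -/
def bil (x y : Fin 3 → ℤ) : ℤ := x ⬝ᵥ T1.mulVec y

/-- The quadratic form `Q(x) = (x, x)` of `T¹₁₁`. -/
def Q (x : Fin 3 → ℤ) : ℤ := bil x x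

/-- `x` is primitive: the gcd of its coordinates is `1`. -/
def IsPrimitiveVec (x : Fin 3 → ℤ) : Prop :=
  Int.gcd (Int.gcd (x 0) (x 1)) (x 2) = 1

/-- `x` has divisor `2`: `(x, y) ∈ 2ℤ` for all `y ∈ ℤ³`. -/
def HasDivisorTwo (x : Fin 3 → ℤ) : Prop := ∀ y : Fin 3 → ℤ, 2 ∣ bil x y

/-!
Writing `x = (a, b, c)`, the form is `Q x = 2 N(a, b) + 22 c²` with `N(a, b) = a² + ab + 3b²`
the positive definite binary form of discriminant `-11`. Since `4 N = (2a + b)² + 11 b²`,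
the values of `N` below `11` are a finite check, and `N` misses `2, 6, 7, 8, 10`; vectors with
`c ≠ 0` already have `Q ≥ 22`. A vector has divisor `2` exactly when `a` and `b` are even, so a
primitive one has `c` odd and hence `Q ≥ 22`, with equality at `(0, 0, 1)`.
-/

lemma bil_apply (x y : Fin 3 → ℤ) :
    bil x y = 2 * x 0 * y 0 + x 0 * y 1 + x 1 * y 0 + 6 * x 1 * y 1 + 22 * x 2 * y 2 := by
  simp [bil, T1, mulVec, dotProduct, Fin.sum_univ_three]
  ring

lemma Q_apply (x : Fin 3 → ℤ) :
    Q x = 2 * (x 0 ^ 2 + x 0 * x 1 + 3 * x 1 ^ 2) + 22 * x 2 ^ 2 := by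
  rw [Q, bil_apply]
  ring

lemma sq_add_mul_add_three_mul_sq_nonneg (a b : ℤ) : 0 ≤ a ^ 2 + a * b + 3 * b ^ 2 := by
  nlinarith [sq_nonneg (2 * a + b), sq_nonneg b]

lemma sq_add_mul_add_three_mul_sq_notMem (a b : ℤ) :
    a ^ 2 + a * b + 3 * b ^ 2 ∉ ({2, 6, 7, 8, 10} : Set ℤ) := by
  have h_four_mul : 4 * (a ^ 2 + a * b + 3 * b ^ 2) = (2 * a + b) ^ 2 + 11 * b ^ 2 := by ring
  generalize 2 * a + b = u at h_four_mul
  simp only [Set.mem_insert_iff, Set.mem_singleton_iff]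
  intro hmem
  have hle : u ^ 2 + 11 * b ^ 2 ≤ 40 := by omega
  obtain ⟨hb_lo, hb_hi⟩ : -1 ≤ b ∧ b ≤ 1 := by constructor <;> nlinarith [sq_nonneg u]
  obtain ⟨hu_lo, hu_hi⟩ : -6 ≤ u ∧ u ≤ 6 := by constructor <;> nlinarith [sq_nonneg b]
  interval_cases b <;> interval_cases u <;> omega

lemma twentyTwo_le_Q_of_ne_zero {x : Fin 3 → ℤ} (hx : x 2 ≠ 0) : 22 ≤ Q x := by
  have : 0 < x 2 ^ 2 := by positivity
  rw [Q_apply]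
  nlinarith [sq_add_mul_add_three_mul_sq_nonneg (x 0) (x 1)]

lemma hasDivisorTwo_iff (f : Fin 3 → ℤ) : HasDivisorTwo f ↔ 2 ∣ f 0 ∧ 2 ∣ f 1 := by
  constructor
  · intro hf
    have h0 := hf ![1, 0, 0]
    have h1 := hf ![0, 1, 0]
    simp [bil_apply] at h0 h1
    omega
  · rintro ⟨⟨a, ha⟩, ⟨b, hb⟩⟩ y
    rw [bil_apply, ha, hb]
    exact ⟨2 * a * y 0 + a * y 1 + b * y 0 + 6 * b * y 1 + 11 * f 2 * y 2, by ring⟩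

lemma IsPrimitiveVec.not_dvd_coord_two {x : Fin 3 → ℤ} (hx : IsPrimitiveVec x) {d : ℤ}
    (hd : ¬IsUnit d) (h0 : d ∣ x 0) (h1 : d ∣ x 1) : ¬d ∣ x 2 := by
  intro h2
  have : d ∣ ((Int.gcd (Int.gcd (x 0) (x 1)) (x 2) : ℕ) : ℤ) :=
    Int.dvd_coe_gcd (Int.dvd_coe_gcd h0 h1) h2
  rw [hx, Nat.cast_one] at this
  exact hd (isUnit_of_dvd_one this)

/-- (i) `T¹₁₁` contains a vector of square `2`;
(ii) `T¹₁₁` contains no primitive vector of square `4`, `12`, `14`, `16`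
or `20`;
(iii) the least square of a primitive vector of divisor `2` in `T¹₁₁`
is `22`. -/
theorem T1_polarizations :
    (∃ x : Fin 3 → ℤ, Q x = 2) ∧
    (¬ ∃ x : Fin 3 → ℤ, IsPrimitiveVec x ∧
      (Q x = 4 ∨ Q x = 12 ∨ Q x = 14 ∨ Q x = 16 ∨ Q x = 20)) ∧
    IsLeast {q : ℤ | ∃ f : Fin 3 → ℤ, IsPrimitiveVec f ∧ HasDivisorTwo f ∧ Q f = q}
      22 := by
  refine ⟨⟨![1, 0, 0], by simp [Q_apply]⟩, ?_, ?_, ?_⟩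
  · rintro ⟨x, -, hx⟩
    by_cases h2 : x 2 = 0
    · have := sq_add_mul_add_three_mul_sq_notMem (x 0) (x 1)
      simp only [Q_apply, h2, Set.mem_insert_iff, Set.mem_singleton_iff] at hx this
      omega
    · have := twentyTwo_le_Q_of_ne_zero h2
      omega
  · exact ⟨![0, 0, 1], by simp [IsPrimitiveVec], (hasDivisorTwo_iff _).2 (by simp),
      by simp [Q_apply]⟩
  · rintro _ ⟨f, hf, hd, rfl⟩
    obtain ⟨h0, h1⟩ := (hasDivisorTwo_iff f).1 hd
    exact twentyTwo_le_Q_of_ne_zero fun h2 =>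
      hf.not_dvd_coord_two (by decide) h0 h1 (h2 ▸ dvd_zero 2)
end

section
/- The lattice N = S₁₁ ⊕ (6) admits no nontrivial even overlattices: if x ∈ N ⊗ ℚ satisfies (x, m) ∈ ℤ for all m ∈ N (i.e., x lies in the dual lattice N^∨) and (x, x) ∈ 2ℤ, then x ∈ N. (Equivalently, the discriminant group N^∨/N contains no nonzero isotropic elements for the discriminant form.) -/
/-!
For `x` in the dual lattice, `y = x GN` is integral and `66 x = y W` with `W = 66 GN⁻¹`, so
`66 (x, x) = y W yᵀ`; evenness of `(x, x)` becomes `132 ∣ y W yᵀ` and `x ∈ N` becomes `66 ∣ y W`.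
Now `W = 6 A ⊕ (11)` with `A = 11 M⁻¹`, so `132 ∣ 6 y A yᵀ + 11 y₂₀²`, which forces `6 ∣ y₂₀` and
`11 ∣ y A yᵀ`. Modulo 11 the form `A` has rank 2 and is equivalent to `u₁² + u₂²`, which is
anisotropic over `𝔽₁₁` because `-1` is not a square mod 11; hence `11 ∣ y A`.
-/

open Matrix

/-- Gram matrix of `N = S₁₁ ⊕ (6)`: block-diagonal with blocks the Gram matrix
`M` of `S₁₁` and `[6]`. -/
def GN : Matrix (Fin 21) (Fin 21) ℤ :=
  !![-4, 1, -2, -2, -1, 1, -1, 1, -1, -1, 2, 1, -1, 2, -1, -2, -2, 2, 1, -1, 0;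
     1, -4, -1, -1, -1, -1, -1, 1, -1, 2, -1, -2, 2, 0, -1, 0, 0, -1, -2, 1, 0;
     -2, -1, -4, -2, -1, -1, 0, 1, 0, -1, 1, 0, -1, 2, -2, -1, -1, 0, 0, 1, 0;
     -2, -1, -2, -4, 0, 0, -2, 0, -1, 0, 2, 1, 0, 1, 0, 0, -1, 1, 0, -1, 0;
     -1, -1, -1, 0, -4, 1, -1, 2, -2, -1, 1, 0, -1, 0, -2, -2, 0, 1, 1, -1, 0;
     1, -1, -1, 0, 1, -4, 0, -1, 0, 1, -2, -1, 0, -1, -1, 0, -1, 0, -1, 1, 0;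
     -1, -1, 0, -2, -1, 0, -4, 1, -2, 1, 1, 1, 0, -1, 0, -1, 0, 2, 0, -2, 0;
     1, 1, 1, 0, 2, -1, 1, -4, 0, 0, -1, 1, 1, 0, 2, 1, 0, -1, 1, 0, 0;
     -1, -1, 0, -1, -2, 0, -2, 0, -4, 0, 0, 1, 1, 0, -1, -2, 0, 2, 0, -2, 0;
     -1, 2, -1, 0, -1, 1, 1, 0, 0, -4, 1, 1, -2, 1, 0, 0, 1, 1, 1, 0, 0;
     2, -1, 1, 2, 1, -2, 1, -1, 0, 1, -4, -2, 2, -1, 0, 0, 0, -1, -2, 1, 0;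
     1, -2, 0, 1, 0, -1, 1, 1, 1, 1, -2, -4, 1, 0, -1, 0, -1, -1, -2, 2, 0;
     -1, 2, -1, 0, -1, 0, 0, 1, 1, -2, 2, 1, -4, 0, -1, 0, 0, 1, 2, 0, 0;
     2, 0, 2, 1, 0, -1, -1, 0, 0, 1, -1, 0, 0, -4, 1, 1, 1, 0, 0, -1, 0;
     -1, -1, -2, 0, -2, -1, 0, 2, -1, 0, 0, -1, -1, 1, -4, -2, -1, 1, 0, 0, 0;
     -2, 0, -1, 0, -2, 0, -1, 1, -2, 0, 0, 0, 0, 1, -2, -4, -2, 2, 0, -1, 0;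
     -2, 0, -1, -1, 0, -1, 0, 0, 0, 1, 0, -1, 0, 1, -1, -2, -4, 1, 0, 0, 0;
     2, -1, 0, 1, 1, 0, 2, -1, 2, 1, -1, -1, 1, 0, 1, 2, 1, -4, 0, 2, 0;
     1, -2, 0, 0, 1, -1, 0, 1, 0, 1, -2, -2, 2, 0, 0, 0, 0, 0, -4, 1, 0;
     -1, 1, 1, -1, -1, 1, -2, 0, -2, 0, 1, 2, 0, -1, 0, -1, 0, 2, 1, -4, 0;
     0, 0, 0, 0, 0, 0, 0, 0, 0, 0, 0, 0, 0, 0, 0, 0, 0, 0, 0, 0, 6]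

/-- `GN` as a rational matrix. -/
def GNQ : Matrix (Fin 21) (Fin 21) ℚ := GN.map (Int.cast : ℤ → ℚ)

section DualLattice

variable {ι : Type*} [Fintype ι] [DecidableEq ι]

theorem exists_vecMul_eq_intCast_of_mem_dual (G : Matrix ι ι ℤ) (x : ι → ℚ)
    (hdual : ∀ m : ι → ℤ, ∃ k : ℤ, x ⬝ᵥ G.map (Int.cast : ℤ → ℚ) *ᵥ (fun i => (m i : ℚ)) = k) :
    ∃ y : ι → ℤ, x ᵥ* G.map (Int.cast : ℤ → ℚ) = fun i => (y i : ℚ) := by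
  choose y hy using fun j => hdual (Pi.single j 1)
  refine ⟨y, funext fun j => ?_⟩
  rw [← hy, dotProduct_mulVec]
  simp [Pi.single_apply, dotProduct]

theorem exists_intCast_eq_of_mem_dual_of_even (G W : Matrix ι ι ℤ) {d : ℤ} (hd : d ≠ 0)
    (hGW : G * W = d • 1)
    (hW : ∀ y : ι → ℤ, 2 * d ∣ y ⬝ᵥ (y ᵥ* W) → ∀ i, d ∣ (y ᵥ* W) i) (x : ι → ℚ)
    (hdual : ∀ m : ι → ℤ, ∃ k : ℤ, x ⬝ᵥ G.map (Int.cast : ℤ → ℚ) *ᵥ (fun i => (m i : ℚ)) = k)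
    (heven : ∃ k : ℤ, x ⬝ᵥ G.map (Int.cast : ℤ → ℚ) *ᵥ x = 2 * k) :
    ∀ i, ∃ n : ℤ, x i = n := by
  obtain ⟨y, hy⟩ := exists_vecMul_eq_intCast_of_mem_dual G x hdual
  obtain ⟨k, hk⟩ := heven
  let cast := Int.castRingHom ℚ
  change x ᵥ* G.map cast = cast ∘ y at hy
  change x ⬝ᵥ G.map cast *ᵥ x = 2 * cast k at hk
  have hx : cast ∘ (y ᵥ* W) = (d : ℚ) • x := by
    ext i
    rw [Function.comp_apply, RingHom.map_vecMul, ← hy, vecMul_vecMul, ← Matrix.map_mul, hGW,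
      smul_one_eq_diagonal, diagonal_map (map_zero cast), vecMul_diagonal]
    simp [cast, mul_comm]
  have hq : y ⬝ᵥ (y ᵥ* W) = 2 * d * k := by
    apply Int.cast_injective (α := ℚ)
    rw [← eq_intCast cast, RingHom.map_dotProduct, hx, ← hy, dotProduct_smul,
      ← dotProduct_mulVec, hk]
    simp only [eq_intCast, smul_eq_mul, Int.cast_mul, Int.cast_ofNat, cast]
    ring
  intro i
  obtain ⟨n, hn⟩ := hW y ⟨k, hq⟩ i
  exact ⟨n, by simpa [cast, hn, hd, eq_comm] using congrFun hx i⟩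

end DualLattice

theorem ZMod.eq_zero_of_dotProduct_self_eq_zero {p : ℕ} [Fact p.Prime] (hp : p % 4 = 3)
    (u : Fin 2 → ZMod p) (hu : u ⬝ᵥ u = 0) : u = 0 := by
  have hu' : u 0 ^ 2 + u 1 ^ 2 = 0 := by simpa [dotProduct, Fin.sum_univ_two, sq] using hu
  have h0 : u 0 = 0 := by
    by_contra h
    have hnsq : ¬IsSquare (-1 : ZMod p) := by rw [ZMod.exists_sq_eq_neg_one_iff]; omega
    exact hnsq ⟨u 1 / u 0, by field_simp; linear_combination -hu'⟩
  have h1 : u 1 = 0 := by simpa [h0] using hu'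
  ext i; fin_cases i <;> assumption

theorem vecMul_transpose_mul_self_eq_zero {R k m : Type*} [CommRing R] [Fintype k] [Fintype m]
    (L : Matrix k m R) (hR : ∀ u : k → R, u ⬝ᵥ u = 0 → u = 0) (y : m → R)
    (hy : y ⬝ᵥ (y ᵥ* (Lᵀ * L)) = 0) : y ᵥ* (Lᵀ * L) = 0 := by
  have hLy : L *ᵥ y = 0 := by
    apply hR
    rwa [← vecMul_vecMul, vecMul_transpose, dotProduct_comm, ← dotProduct_mulVec] at hy
  rw [← vecMul_vecMul, vecMul_transpose, hLy, zero_vecMul]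

theorem dvd_vecMul_of_dvd_dotProduct_vecMul {p : ℕ} [Fact p.Prime] (hp : p % 4 = 3) {m : Type*}
    [Fintype m] (A : Matrix m m ℤ) (L : Matrix (Fin 2) m (ZMod p))
    (hA : A.map (Int.cast : ℤ → ZMod p) = Lᵀ * L) (y : m → ℤ)
    (hy : (p : ℤ) ∣ y ⬝ᵥ (y ᵥ* A)) (i : m) : (p : ℤ) ∣ (y ᵥ* A) i := by
  let cast := Int.castRingHom (ZMod p)
  have hA' : A.map cast = Lᵀ * L := hA
  rw [← ZMod.intCast_zmod_eq_zero_iff_dvd] at hy ⊢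
  change cast _ = 0 at hy ⊢
  have hmap : cast ∘ (y ᵥ* A) = (cast ∘ y) ᵥ* (Lᵀ * L) := by
    ext j; rw [Function.comp_apply, RingHom.map_vecMul, hA']
  rw [RingHom.map_dotProduct, hmap] at hy
  rw [← Function.comp_apply (f := cast), hmap,
    vecMul_transpose_mul_self_eq_zero L (ZMod.eq_zero_of_dotProduct_self_eq_zero hp) _ hy]
  rfl

theorem dvd_and_dvd_of_dvd_six_mul_add_eleven_mul_sq {a s : ℤ} (h : 132 ∣ 6 * a + 11 * s ^ 2) :
    6 ∣ s ∧ 11 ∣ a := by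
  have hs2 : 2 ∣ s := Int.prime_two.dvd_of_dvd_pow (n := 2) (by omega)
  have hs3 : 3 ∣ s := Int.prime_three.dvd_of_dvd_pow (n := 2) (by omega)
  obtain ⟨t, rfl⟩ : 6 ∣ s := by omega
  exact ⟨dvd_mul_right 6 t, by ring_nf at h; omega⟩

/-- `11 • M⁻¹`, bordered by a zero row and column. -/
def dualGramS11 : Matrix (Fin 21) (Fin 21) ℤ :=
  !![-54, -93, 41, 32, 48, -2, 1, -13, 17, -49, 13, 24, -18, -21, -19, -19, -5, -20, -1, -14, 0;
    -93, -282, 66, 105, 181, 28, 8, -15, 16, -142, 28, 61, -68, -58, -31, -58, -41, -37, 25, -53, 0;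
    41, 66, -74, 10, -24, 33, -11, -15, -26, 45, -4, -26, 4, 0, 11, 31, -7, 25, -11, 6, 0;
    32, 105, 10, -86, -78, -35, 23, 32, 7, 58, -30, -19, 25, 34, 25, -2, 38, 15, 10, 23, 0;
    48, 181, -24, -78, -140, -31, -1, 5, 8, 95, -21, -32, 48, 43, 19, 37, 35, 26, -21, 37, 0;
    -2, 28, 33, -35, -31, -46, 12, 27, 13, 7, -2, -2, 19, 23, 14, -10, 21, -6, 10, 3, 0;
    1, 8, -11, 23, -1, 12, -28, -19, -1, -9, 12, 1, 7, -6, -18, 16, -16, -8, -16, 4, 0;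
    -13, -15, -15, 32, 5, 27, -19, -42, 4, -6, 14, 3, -7, -19, -24, 13, -12, 0, -25, 1, 0;
    17, 16, -26, 7, 8, 13, -1, 4, -26, 10, 0, -11, -6, -1, 8, 9, -8, 2, 1, 0, 0;
    -49, -142, 45, 58, 95, 7, -9, -6, 10, -92, 24, 35, -23, -31, -27, -28, -30, -33, 9, -25, 0;
    13, 28, -4, -30, -21, -2, 12, 14, 0, 24, -26, -4, -1, 12, 14, 0, 12, 12, 10, 6, 0;
    24, 61, -26, -19, -32, -2, 1, 3, -11, 35, -4, -26, 10, 12, 14, 11, 12, 12, -1, 6, 0;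
    -18, -68, 4, 25, 48, 19, 7, -7, -6, -23, -1, 10, -34, -15, -1, -14, -9, -5, 4, -15, 0;
    -21, -58, 0, 34, 43, 23, -6, -19, -1, -31, 12, 12, -15, -28, -18, -6, -16, -8, -5, -7, 0;
    -19, -31, 11, 25, 19, 14, -18, -24, 8, -27, 14, 14, -1, -18, -32, 4, -15, -13, -15, 1, 0;
    -19, -58, 31, -2, 37, -10, 16, 13, 9, -28, 0, 11, -14, -6, 4, -34, 7, -10, 17, -11, 0;
    -5, -41, -7, 38, 35, 21, -16, -12, -8, -30, 12, 12, -9, -16, -15, 7, -30, -10, -6, -7, 0;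
    -20, -37, 25, 15, 26, -6, -8, 0, 2, -33, 12, 12, -5, -8, -13, -10, -10, -26, -3, -7, 0;
    -1, 25, -11, 10, -21, 10, -16, -25, 1, 9, 10, -1, 4, -5, -15, 17, -6, -3, -28, 7, 0;
    -14, -53, 6, 23, 37, 3, 4, 1, 0, -25, 6, 6, -15, -7, 1, -11, -7, -7, 7, -20, 0;
    0, 0, 0, 0, 0, 0, 0, 0, 0, 0, 0, 0, 0, 0, 0, 0, 0, 0, 0, 0, 0]

def dualGramS11Factor : Matrix (Fin 2) (Fin 21) (ZMod 11) :=
  !![-3, -2, 0, -3, 3, -3, -4, 2, 3, 5, -3, -3, 1, -4, -1, -4, 4, 2, 4, -1, 0;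
    -5, 0, 5, 2, 4, 0, 0, -3, -3, -2, -3, -3, 3, 0, 0, 4, 3, 5, 0, -1, 0]

def WN : Matrix (Fin 21) (Fin 21) ℤ := (6 : ℤ) • dualGramS11 + Matrix.single 20 20 11

theorem GN_mul_WN : GN * WN = (66 : ℤ) • 1 := by decide +kernel

theorem dualGramS11_map_intCast :
    dualGramS11.map (Int.cast : ℤ → ZMod 11) = dualGramS11Factorᵀ * dualGramS11Factor := by
  decide +kernel

theorem dvd_vecMul_WN_of_dvd (y : Fin 21 → ℤ) (hy : 132 ∣ y ⬝ᵥ (y ᵥ* WN)) (i : Fin 21) :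
    66 ∣ (y ᵥ* WN) i := by
  have hsplit : y ᵥ* WN = (6 : ℤ) • (y ᵥ* dualGramS11) + Pi.single 20 (y 20 * 11) := by
    rw [WN, vecMul_add, vecMul_smul]
    congr 1
    ext j
    simp [vecMul, dotProduct, Matrix.single_apply, Pi.single_apply, ite_and, eq_comm]
  have hq : y ⬝ᵥ (y ᵥ* WN) = 6 * (y ⬝ᵥ (y ᵥ* dualGramS11)) + 11 * y 20 ^ 2 := by
    rw [hsplit, dotProduct_add, dotProduct_smul, dotProduct_single, smul_eq_mul]; ring
  obtain ⟨h6, h11⟩ := dvd_and_dvd_of_dvd_six_mul_add_eleven_mul_sq (hq ▸ hy)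
  have : Fact (Nat.Prime 11) := ⟨by norm_num⟩
  have hA := dvd_vecMul_of_dvd_dotProduct_vecMul (p := 11) (by norm_num) _ _
    dualGramS11_map_intCast y (by exact_mod_cast h11) i
  rw [hsplit, Pi.add_apply, Pi.smul_apply, smul_eq_mul, Pi.single_apply]
  split_ifs with hi
  · subst hi; omega
  · omega

/-- If `x ∈ N ⊗ ℚ` pairs integrally with every element of `N` (i.e. `x ∈ N^∨`)
and has even square, then `x ∈ N`: the lattice `N = S₁₁ ⊕ (6)` has no
nontrivial even overlattices. -/
theorem no_nontrivial_even_overlattice (x : Fin 21 → ℚ)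
    (hdual : ∀ m : Fin 21 → ℤ, ∃ k : ℤ, x ⬝ᵥ GNQ.mulVec (fun i => (m i : ℚ)) = k)
    (heven : ∃ k : ℤ, x ⬝ᵥ GNQ.mulVec x = 2 * k) :
    ∀ i, ∃ n : ℤ, x i = n :=
  exists_intCast_eq_of_mem_dual_of_even GN WN (by norm_num) GN_mul_WN dvd_vecMul_WN_of_dvd
    x hdual heven
end

section
/- Let a₀, ..., a₅ ∈ ℂ and let f = a₀x₀³ + a₁x₁²x₅ + a₂x₂²x₄ + a₃x₃²x₂ + a₄x₄²x₁ + a₅x₅²x₃ ∈ ℂ[x₀,...,x₅]. Then there exists a nonzero point v ∈ ℂ⁶ at which all six partial derivatives ∂f/∂x₀, ..., ∂f/∂x₅ vanish if and only if aᵢ = 0 for some i. In particular, the Klein cubic fourfold X_Kl = V(x₀³ + x₁²x₅ + x₂²x₄ + x₃²x₂ + x₄²x₁ + x₅²x₃) ⊂ ℙ⁵ is smooth. -/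
open MvPolynomial

/-!
Smoothness of cubic fourfolds of Klein type:  for
`f = a₀x₀³ + a₁x₁²x₅ + a₂x₂²x₄ + a₃x₃²x₂ + a₄x₄²x₁ + a₅x₅²x₃`, all partial
derivatives of `f` have a common nonzero zero in `ℂ⁶` iff some `aᵢ = 0`.
In particular the Klein cubic fourfold `X_Kl` is smooth.
-/

/-- The cubic `a₀x₀³ + a₁x₁²x₅ + a₂x₂²x₄ + a₃x₃²x₂ + a₄x₄²x₁ + a₅x₅²x₃`. -/
noncomputable def cubic (a : Fin 6 → ℂ) : MvPolynomial (Fin 6) ℂ :=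
  C (a 0) * X 0 ^ 3 + C (a 1) * X 1 ^ 2 * X 5 + C (a 2) * X 2 ^ 2 * X 4 +
    C (a 3) * X 3 ^ 2 * X 2 + C (a 4) * X 4 ^ 2 * X 1 + C (a 5) * X 5 ^ 2 * X 3

/-- The defining polynomial `h` of the Klein cubic fourfold `X_Kl ⊂ ℙ⁵`. -/
noncomputable def klein : MvPolynomial (Fin 6) ℂ := cubic 1


lemma ev0 (a v : Fin 6 → ℂ) : eval v (pderiv 0 (cubic a)) = 3 * a 0 * v 0 ^ 2 := by
  simp [cubic, pderiv_mul, pderiv_pow, Pi.single_apply]; ring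
lemma ev1 (a v : Fin 6 → ℂ) : eval v (pderiv 1 (cubic a)) = 2 * a 1 * v 1 * v 5 + a 4 * v 4 ^ 2 := by
  simp [cubic, pderiv_mul, pderiv_pow, Pi.single_apply]; ring
lemma ev2 (a v : Fin 6 → ℂ) : eval v (pderiv 2 (cubic a)) = 2 * a 2 * v 2 * v 4 + a 3 * v 3 ^ 2 := by
  simp [cubic, pderiv_mul, pderiv_pow, Pi.single_apply]; ring
lemma ev3 (a v : Fin 6 → ℂ) : eval v (pderiv 3 (cubic a)) = 2 * a 3 * v 3 * v 2 + a 5 * v 5 ^ 2 := by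
  simp [cubic, pderiv_mul, pderiv_pow, Pi.single_apply]; ring
lemma ev4 (a v : Fin 6 → ℂ) : eval v (pderiv 4 (cubic a)) = 2 * a 4 * v 4 * v 1 + a 2 * v 2 ^ 2 := by
  simp [cubic, pderiv_mul, pderiv_pow, Pi.single_apply]; ring
lemma ev5 (a v : Fin 6 → ℂ) : eval v (pderiv 5 (cubic a)) = 2 * a 5 * v 5 * v 3 + a 1 * v 1 ^ 2 := by
  simp [cubic, pderiv_mul, pderiv_pow, Pi.single_apply]; ring

lemma sq0 {a x : ℂ} (ha : a ≠ 0) (h : a * x ^ 2 = 0) : x = 0 := by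
  rcases mul_eq_zero.1 h with h | h
  · exact absurd h ha
  · exact pow_eq_zero_iff (by norm_num) |>.1 h

/-- If all the coefficients are nonzero, the partials have no common nonzero zero. -/
lemma cubic_core (a : Fin 6 → ℂ) (ha : ∀ i, a i ≠ 0) (v : Fin 6 → ℂ)
    (h : ∀ i : Fin 6, eval v (pderiv i (cubic a)) = 0) : v = 0 := by
  have h0 := h 0; have h1 := h 1; have h2 := h 2
  have h3 := h 3; have h4 := h 4; have h5 := h 5
  simp [cubic, pderiv_mul, pderiv_pow, Pi.single_apply] at h0 h1 h2 h3 h4 h5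
  have hv0 : v 0 = 0 := h0.resolve_left (ha 0)
  have E1 : a 4 * v 4 ^ 2 = -2 * a 1 * v 1 * v 5 := by linear_combination h1
  have E2 : a 3 * v 3 ^ 2 = -2 * a 2 * v 2 * v 4 := by linear_combination h2
  have E3 : a 5 * v 5 ^ 2 = -2 * a 3 * v 3 * v 2 := by linear_combination h3
  have E4 : a 2 * v 2 ^ 2 = -2 * a 4 * v 4 * v 1 := by linear_combination h4
  have E5 : a 1 * v 1 ^ 2 = -2 * a 5 * v 5 * v 3 := by linear_combination h5
  have key : (a 1 * v 1 ^ 2) * (a 2 * v 2 ^ 2) * (a 3 * v 3 ^ 2) * (a 4 * v 4 ^ 2) *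
      (a 5 * v 5 ^ 2) =
      -32 * (a 1 * a 2 * a 3 * a 4 * a 5) * (v 1 * v 2 * v 3 * v 4 * v 5) ^ 2 := by
    rw [E1, E2, E3, E4, E5]; ring
  have h33 : (33 : ℂ) * (a 1 * a 2 * a 3 * a 4 * a 5) * (v 1 * v 2 * v 3 * v 4 * v 5) ^ 2 = 0 := by
    linear_combination key
  have hP : v 1 = 0 ∨ v 2 = 0 ∨ v 3 = 0 ∨ v 4 = 0 ∨ v 5 = 0 := by
    rcases mul_eq_zero.1 h33 with h' | h'
    · rcases mul_eq_zero.1 h' with h'' | h''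
      · norm_num at h''
      · exact absurd h'' (mul_ne_zero (mul_ne_zero (mul_ne_zero
          (mul_ne_zero (ha 1) (ha 2)) (ha 3)) (ha 4)) (ha 5))
    · have := pow_eq_zero_iff (n := 2) (by norm_num) |>.1 h'
      simpa [mul_eq_zero, or_assoc] using this
  have p1 : v 1 = 0 → v 2 = 0 ∧ v 3 = 0 ∧ v 4 = 0 ∧ v 5 = 0 := by
    intro hv1
    have hv4 : v 4 = 0 := sq0 (ha 4) (by rw [E1, hv1]; ring)
    have hv2 : v 2 = 0 := sq0 (ha 2) (by rw [E4, hv4]; ring)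
    have hv3 : v 3 = 0 := sq0 (ha 3) (by rw [E2, hv4]; ring)
    have hv5 : v 5 = 0 := sq0 (ha 5) (by rw [E3, hv3]; ring)
    exact ⟨hv2, hv3, hv4, hv5⟩
  have all : v 1 = 0 ∧ v 2 = 0 ∧ v 3 = 0 ∧ v 4 = 0 ∧ v 5 = 0 := by
    rcases hP with h' | h' | h' | h' | h'
    · exact ⟨h', p1 h'⟩
    · have hv5 : v 5 = 0 := sq0 (ha 5) (by rw [E3, h']; ring)
      have hv1 : v 1 = 0 := sq0 (ha 1) (by rw [E5, hv5]; ring)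
      exact ⟨hv1, p1 hv1⟩
    · have hv1 : v 1 = 0 := sq0 (ha 1) (by rw [E5, h']; ring)
      exact ⟨hv1, p1 hv1⟩
    · have hv3 : v 3 = 0 := sq0 (ha 3) (by rw [E2, h']; ring)
      have hv5 : v 5 = 0 := sq0 (ha 5) (by rw [E3, hv3]; ring)
      have hv1 : v 1 = 0 := sq0 (ha 1) (by rw [E5, hv5]; ring)
      exact ⟨hv1, p1 hv1⟩
    · have hv1 : v 1 = 0 := sq0 (ha 1) (by rw [E5, h']; ring)
      exact ⟨hv1, p1 hv1⟩
  obtain ⟨hv1, hv2, hv3, hv4, hv5⟩ := all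
  funext i
  fin_cases i <;> simp_all

/-- If `a i = 0` then `Pi.single i 1` is a common nonzero zero of the partials. -/
lemma cubic_single (a : Fin 6 → ℂ) (i : Fin 6) (hi : a i = 0) :
    ∀ j : Fin 6, eval (Pi.single i 1 : Fin 6 → ℂ) (pderiv j (cubic a)) = 0 := by
  intro j
  fin_cases i <;> fin_cases j <;>
    simp [ev0, ev1, ev2, ev3, ev4, ev5, Pi.single_apply, hi] <;> exact hi

/-- All six partial derivatives of `cubic a` vanish simultaneously at some
nonzero point of `ℂ⁶` if and only if `aᵢ = 0` for some `i`.  In particular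
(second conjunct) the common vanishing locus in `ℂ⁶` of the partial
derivatives of `h = x₀³ + x₁²x₅ + x₂²x₄ + x₃²x₂ + x₄²x₁ + x₅²x₃` is `{0}`,
i.e. the Klein cubic fourfold `X_Kl = V(h)` is smooth. -/
theorem klein_type_singular_iff (a : Fin 6 → ℂ) :
    ((∃ v : Fin 6 → ℂ, v ≠ 0 ∧ ∀ i : Fin 6, eval v (pderiv i (cubic a)) = 0) ↔
      ∃ i, a i = 0) ∧
    (∀ v : Fin 6 → ℂ, (∀ i : Fin 6, eval v (pderiv i klein) = 0) → v = 0) := by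
  constructor
  · constructor
    · rintro ⟨v, hv, h⟩
      by_contra hc
      push_neg at hc
      exact hv (cubic_core a hc v h)
    · rintro ⟨i, hi⟩
      refine ⟨Pi.single i 1, ?_, cubic_single a i hi⟩
      intro h
      have := congrFun h i
      simp at this
  · intro v hv
    exact cubic_core 1 (fun i => one_ne_zero) v (by simpa [klein] using hv)
end
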